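/- arXiv:0706.3842 — 3 statements merged into one kernel-verified Lean document; each statement's English description precedes it below -/
import Mathlib

section
/- Let x be a non-zerodivisor of a Noetherian ring R of prime characteristic p, and suppose R has finite F-representation type by finitely generated R-modules M_1, …, M_s. If the descending chain I_1(x^{p-1}, M_i) ⊇ I_2(x^{p²-1}, M_i) ⊇ ⋯ stabilizes at e (that is, I_e(x^{pᵉ-1}, M_i) = I_{e+1}(x^{p^{e+1}-1}, M_i) = ⋯) for all i = 1, …, s, then there exists a differential operator δ ∈ D_R^{(e+1)} = End_{R^{p^{e+1}}}(R) such that δ(1/x) = 1/x^p in R_x. When R is F-pure, the converse also holds. -/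
/-!
Statement 12: Let `x` be a non-zerodivisor of a Noetherian ring `R` of prime
characteristic `p` with finite F-representation type by `M_1, …, M_s`.  If the chain
`I_1(x^{p-1}, M_i) ⊇ I_2(x^{p²-1}, M_i) ⊇ ⋯` stabilizes at `e` for all `i`, then some
`δ ∈ D_R^{(e+1)} = End_{R^{p^{e+1}}}(R)` satisfies `δ(1/x) = 1/x^p` in `R_x`
(the action of an `R^q`-linear `δ` on `R_x` being `δ(y/s) = δ(s^{q-1}y)/s^q`, so that
`δ(1/x) = 1/x^p` means `δ(x^{q-1})·x^p = x^q` in `R_x`, `q = p^{e+1}`).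
When `R` is F-pure the converse also holds.
-/

open scoped DirectSum

universe u

section Defs

/-- The submodule `I_e(𝔞, M) = Hom_R(ᵉR, M) · 𝔞 ⊆ M`. -/
def frobIe (p e : ℕ) (R : Type u) (M : Type u) [CommRing R] [AddCommGroup M]
    [Module R M] (a : Ideal R) : Submodule R M :=
  Submodule.span R
    {m | ∃ φ : R →+ M, (∀ r y : R, φ (r ^ p ^ e * y) = r • φ y) ∧ ∃ y ∈ a, φ y = m}

/-- `R` is F-pure; for rings of finite F-representation type (hence F-finite, as here)
this is equivalent to Frobenius splitting. -/
def FPure (p : ℕ) (R : Type u) [CommRing R] : Prop :=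
  ∃ φ : R →+ R, (∀ r y : R, φ (r ^ p * y) = r * φ y) ∧ φ 1 = 1

/-- The chain `I_e(x^{pᵉ-1}, M) ⊇ I_{e+1}(x^{p^{e+1}}-1}, M) ⊇ ⋯` stabilizes at `e`. -/
def chainStabilizesAt (p : ℕ) (R : Type u) (M : Type u) [CommRing R] [AddCommGroup M]
    [Module R M] (x : R) (e : ℕ) : Prop :=
  ∀ e' : ℕ, e ≤ e' →
    frobIe p e' R M (Ideal.span {x ^ (p ^ e' - 1)}) =
      frobIe p e R M (Ideal.span {x ^ (p ^ e - 1)})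

/-- There is a differential operator `δ ∈ D_R^{(e+1)} = End_{R^{p^{e+1}}}(R)` with
`δ(1/x) = 1/x^p` in `R_x`; since such a `δ` acts on `R_x` by
`δ(y/s) = δ(s^{q-1}y)/s^q` for `q = p^{e+1}`, this says `δ(x^{q-1})·x^p = x^q`
in `R_x`. -/
def existsDiffOpSendingInvToInvPow (p : ℕ) (R : Type u) [CommRing R] (x : R)
    (e : ℕ) : Prop :=
  ∃ δ : R →+ R,
    (∀ r y : R, δ (r ^ p ^ (e + 1) * y) = r ^ p ^ (e + 1) * δ y) ∧
    algebraMap R (Localization.Away x) (δ (x ^ (p ^ (e + 1) - 1))) *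
        algebraMap R (Localization.Away x) x ^ p =
      algebraMap R (Localization.Away x) x ^ p ^ (e + 1)

end Defs

/-!
An additive `β : R → R` with `β (r ^ p ^ f' * y) = r ^ p ^ f * β y` and `β g' = g` is an `R`-linear
map `^{f'}R → ᶠR`, so precomposition with it carries `I_f(g, M)` into `I_{f'}(g', M)`.
With `β y = x ^ (p - 1) * y ^ p` this shows that the chain always descends.

For the converse, `δ(1/x) = 1/x^p` means `δ (x ^ (p ^ (e + 1) - 1)) = (x ^ (p ^ e - 1)) ^ p` once
denominators are cleared (`x` is a non-zerodivisor). If `φ` is a Frobenius splitting, `β = φ ∘ δ`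
sends `x ^ (p ^ (f + 1) - 1)` to `x ^ (p ^ f - 1)` for every `f ≥ e`, so the chain climbs back up.

For the forward direction write `ᵉR ≅ N = ⨁ M_i ^ n_i`. Stabilization of each summand shows that
the image of `x ^ (p ^ e - 1)` in `N` lies in `I_{e+1}(x ^ (p ^ (e + 1) - 1), N)`, giving an
`R`-linear `^{e+1}R → N ≅ ᵉR` with `x ^ (p ^ (e + 1) - 1) ↦ x ^ (p ^ e - 1)`; followed by the
Frobenius it is the required `δ`.
-/

theorem pow_pow_sub_one_pow_mul {R : Type*} [CommMonoid R] {p : ℕ} (hp : 0 < p) (x : R)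
    (a b : ℕ) : (x ^ (p ^ a - 1)) ^ p ^ b * x ^ (p ^ b - 1) = x ^ (p ^ (a + b) - 1) := by
  have ha := Nat.one_le_pow a p hp
  have hb := Nat.one_le_pow b p hp
  have hab : 1 ≤ p ^ a * p ^ b := Nat.mul_le_mul ha hb
  rw [← pow_mul, ← pow_add, pow_add p a b]
  congr 1
  zify [ha, hb, hab]
  ring

section FrobeniusIdeals

variable {R M : Type u} [CommRing R] [AddCommGroup M] [Module R M] {p : ℕ}

theorem mem_frobIe_span_singleton_iff {f : ℕ} {g : R} {c : M} :
    c ∈ frobIe p f R M (Ideal.span {g}) ↔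
      ∃ Φ : R →+ M, (∀ r y : R, Φ (r ^ p ^ f * y) = r • Φ y) ∧ Φ g = c := by
  refine ⟨fun hc => ?_, fun ⟨Φ, hΦ, hΦg⟩ =>
    Submodule.subset_span ⟨Φ, hΦ, g, Ideal.mem_span_singleton_self g, hΦg⟩⟩
  induction hc using Submodule.span_induction with
  | mem m hm =>
    obtain ⟨φ, hφ, y, hy, rfl⟩ := hm
    obtain ⟨a, rfl⟩ := Ideal.mem_span_singleton'.1 hy
    exact ⟨φ.comp (AddMonoidHom.mulLeft a), fun r z => by simp [mul_left_comm a, hφ], rfl⟩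
  | zero => exact ⟨0, by simp, rfl⟩
  | add m n _ _ hm hn =>
    obtain ⟨Φ, hΦ, rfl⟩ := hm
    obtain ⟨Ψ, hΨ, rfl⟩ := hn
    exact ⟨Φ + Ψ, fun r y => by simp [hΦ, hΨ], rfl⟩
  | smul a m _ hm =>
    obtain ⟨Φ, hΦ, rfl⟩ := hm
    exact ⟨Φ.comp (AddMonoidHom.mulLeft (a ^ p ^ f)),
      fun r y => by simp [mul_left_comm (a ^ p ^ f), hΦ], by simp [hΦ]⟩

theorem map_mem_frobIe {N : Type u} [AddCommGroup N] [Module R N] (L : M →ₗ[R] N)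
    {e : ℕ} {a : Ideal R} {c : M} (hc : c ∈ frobIe p e R M a) : L c ∈ frobIe p e R N a := by
  refine (Submodule.map_span_le _ _ _).2 ?_ (Submodule.mem_map_of_mem hc)
  rintro _ ⟨φ, hφ, y, hy, rfl⟩
  exact Submodule.subset_span ⟨L.toAddMonoidHom.comp φ, fun r z => by simp [hφ], y, hy, rfl⟩

theorem frobIe_pi_le {ι : Type} [Fintype ι] [DecidableEq ι] {e f : ℕ} {a b : Ideal R}
    (h : frobIe p e R M a ≤ frobIe p f R M b) :
    frobIe p e R (ι → M) a ≤ frobIe p f R (ι → M) b := by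
  intro v hv
  rw [← Finset.univ_sum_single v]
  exact Submodule.sum_mem _ fun j _ =>
    map_mem_frobIe (LinearMap.single R (fun _ => M) j) (h (map_mem_frobIe (LinearMap.proj j) hv))

theorem frobIe_directSum_le {ι : Type} [Fintype ι] [DecidableEq ι] {N : ι → Type u}
    [∀ i, AddCommGroup (N i)] [∀ i, Module R (N i)] {e f : ℕ} {a b : Ideal R}
    (h : ∀ i, frobIe p e R (N i) a ≤ frobIe p f R (N i) b) :
    frobIe p e R (⨁ i, N i) a ≤ frobIe p f R (⨁ i, N i) b := by
  intro v hv
  rw [← DirectSum.sum_univ_of v]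
  exact Submodule.sum_mem _ fun i _ =>
    map_mem_frobIe (DirectSum.lof R ι N i) (h i (map_mem_frobIe (DirectSum.component R ι N i) hv))

theorem frobIe_span_singleton_le_of_comp {f f' : ℕ} {g g' : R} (β : R →+ R)
    (hβ : ∀ r y : R, β (r ^ p ^ f' * y) = r ^ p ^ f * β y) (hβg : β g' = g) :
    frobIe p f R M (Ideal.span {g}) ≤ frobIe p f' R M (Ideal.span {g'}) := by
  intro c hc
  obtain ⟨Φ, hΦ, rfl⟩ := mem_frobIe_span_singleton_iff.1 hc
  exact mem_frobIe_span_singleton_iff.2 ⟨Φ.comp β, fun r y => by simp [hβ, hΦ], by simp [hβg]⟩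

theorem frobIe_succ_le [Fact p.Prime] [CharP R p] (x : R) (f : ℕ) :
    frobIe p (f + 1) R M (Ideal.span {x ^ (p ^ (f + 1) - 1)}) ≤
      frobIe p f R M (Ideal.span {x ^ (p ^ f - 1)}) := by
  refine frobIe_span_singleton_le_of_comp
    ((AddMonoidHom.mulLeft (x ^ (p - 1))).comp (frobenius R p).toAddMonoidHom) (fun r y => ?_) ?_
  · simp [frobenius_def, mul_pow, ← pow_mul, pow_succ, mul_left_comm]
  · simpa [frobenius_def, mul_comm] using
      pow_pow_sub_one_pow_mul (Fact.out : p.Prime).pos x f 1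

theorem frobIe_le_succ_of_splitting (hp : 0 < p) {φ δ : R →+ R}
    (hφ : ∀ r y : R, φ (r ^ p * y) = r * φ y) (hφ1 : φ 1 = 1) {x : R} {e : ℕ}
    (hδ : ∀ r y : R, δ (r ^ p ^ (e + 1) * y) = r ^ p ^ (e + 1) * δ y)
    (hδx : δ (x ^ (p ^ (e + 1) - 1)) = (x ^ (p ^ e - 1)) ^ p) {f : ℕ} (hef : e ≤ f) :
    frobIe p f R M (Ideal.span {x ^ (p ^ f - 1)}) ≤
      frobIe p (f + 1) R M (Ideal.span {x ^ (p ^ (f + 1) - 1)}) := by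
  obtain ⟨k, rfl⟩ := Nat.exists_eq_add_of_le' hef
  refine frobIe_span_singleton_le_of_comp (φ.comp δ) (fun r y => ?_) ?_
  · have hr : r ^ p ^ (k + e + 1) = (r ^ p ^ k) ^ p ^ (e + 1) := by
      rw [← pow_mul, ← pow_add, add_assoc]
    rw [AddMonoidHom.comp_apply, AddMonoidHom.comp_apply, hr, hδ, ← hr, pow_succ, pow_mul, hφ]
  · have hδx' : δ (x ^ (p ^ (k + e + 1) - 1)) = (x ^ (p ^ (k + e) - 1)) ^ p := by
      rw [add_assoc, ← pow_pow_sub_one_pow_mul hp x k (e + 1), hδ, hδx,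
        ← pow_pow_sub_one_pow_mul hp x k e, mul_pow, ← pow_mul (x ^ (p ^ k - 1)), pow_succ]
    rw [AddMonoidHom.comp_apply, hδx', ← mul_one (_ ^ p), hφ, hφ1, mul_one]

theorem chainStabilizesAt_of_le_succ [Fact p.Prime] [CharP R p] {x : R} {e : ℕ}
    (h : ∀ f, e ≤ f → frobIe p f R M (Ideal.span {x ^ (p ^ f - 1)}) ≤
      frobIe p (f + 1) R M (Ideal.span {x ^ (p ^ (f + 1) - 1)})) :
    chainStabilizesAt p R M x e := by
  intro f hef
  induction f, hef using Nat.le_induction with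
  | base => rfl
  | succ f hef ih => rw [← ih]; exact le_antisymm (frobIe_succ_le x f) (h f hef)

theorem exists_diffOp_of_frobIe_le [Fact p.Prime] [CharP R p]
    {N : Type u} [AddCommGroup N] [Module R N] {e : ℕ} (ψ : R ≃+ N)
    (hψ : ∀ r y : R, ψ (r ^ p ^ e * y) = r • ψ y) {x : R}
    (h : frobIe p e R N (Ideal.span {x ^ (p ^ e - 1)}) ≤
      frobIe p (e + 1) R N (Ideal.span {x ^ (p ^ (e + 1) - 1)})) :
    ∃ δ : R →+ R, (∀ r y : R, δ (r ^ p ^ (e + 1) * y) = r ^ p ^ (e + 1) * δ y) ∧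
      δ (x ^ (p ^ (e + 1) - 1)) = (x ^ (p ^ e - 1)) ^ p := by
  obtain ⟨Φ, hΦ, hΦx⟩ := mem_frobIe_span_singleton_iff.1
    (h (mem_frobIe_span_singleton_iff.2 ⟨ψ, hψ, rfl⟩))
  have hψsymm : ∀ (r : R) (v : N), ψ.symm (r • v) = r ^ p ^ e * ψ.symm v := fun r v =>
    ψ.injective (by rw [hψ, ψ.apply_symm_apply, ψ.apply_symm_apply])
  refine ⟨(frobenius R p).toAddMonoidHom.comp (ψ.symm.toAddMonoidHom.comp Φ), fun r y => ?_, ?_⟩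
  · simp only [AddMonoidHom.comp_apply, AddEquiv.coe_toAddMonoidHom, hΦ, hψsymm]
    simp [frobenius_def, mul_pow, ← pow_mul, ← pow_succ]
  · simp [frobenius_def, hΦx]

end FrobeniusIdeals

theorem existsDiffOpSendingInvToInvPow_iff {R : Type u} [CommRing R] {p : ℕ} (hp : 0 < p)
    {x : R} (hx : x ∈ nonZeroDivisors R) {e : ℕ} :
    existsDiffOpSendingInvToInvPow p R x e ↔
      ∃ δ : R →+ R, (∀ r y : R, δ (r ^ p ^ (e + 1) * y) = r ^ p ^ (e + 1) * δ y) ∧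
        δ (x ^ (p ^ (e + 1) - 1)) = (x ^ (p ^ e - 1)) ^ p := by
  have hinj : Function.Injective (algebraMap R (Localization.Away x)) :=
    IsLocalization.injective _ (Submonoid.powers_le.2 hx)
  have hxq : (x ^ (p ^ e - 1)) ^ p * x ^ p = x ^ p ^ (e + 1) := by
    rw [← mul_pow, pow_sub_one_mul (pow_pos hp e).ne', ← pow_mul, pow_succ]
  refine exists_congr fun δ => and_congr_right fun _ => ?_
  rw [← map_pow _ x, ← map_pow _ x, ← map_mul, ← hxq, hinj.eq_iff,
    mul_cancel_right_mem_nonZeroDivisors (pow_mem hx p)]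

theorem stmt12_general {R : Type u} [CommRing R]
    (p : ℕ) (hp : p.Prime) [CharP R p]
    (x : R) (hx : x ∈ nonZeroDivisors R)
    -- finite F-representation type by finitely generated modules `M_1, …, M_s`:
    (s : ℕ) (M : Fin s → Type u) [∀ i, AddCommGroup (M i)] [∀ i, Module R (M i)]
    (hFFRT : ∀ e : ℕ, ∃ (m : Fin s → ℕ)
      (ψ : R ≃+ ⨁ i : Fin s, (Fin (m i) → M i)),
        ∀ r y : R, ψ (r ^ p ^ e * y) = r • ψ y)
    (e : ℕ) :
    ((∀ i, chainStabilizesAt p R (M i) x e) →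
      existsDiffOpSendingInvToInvPow p R x e) ∧
    (FPure p R →
      existsDiffOpSendingInvToInvPow p R x e →
      ∀ i, chainStabilizesAt p R (M i) x e) := by
  have := Fact.mk hp
  refine ⟨fun hchain => ?_, fun ⟨φ, hφ, hφ1⟩ hδ i => ?_⟩
  · obtain ⟨m, ψ, hψ⟩ := hFFRT e
    refine (existsDiffOpSendingInvToInvPow_iff hp.pos hx).2
      (exists_diffOp_of_frobIe_le ψ hψ ?_)
    exact frobIe_directSum_le fun i => frobIe_pi_le (hchain i (e + 1) e.le_succ).ge
  · obtain ⟨δ, hδ, hδx⟩ := (existsDiffOpSendingInvToInvPow_iff hp.pos hx).1 hδ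
    exact chainStabilizesAt_of_le_succ fun f hef =>
      frobIe_le_succ_of_splitting hp.pos hφ hφ1 hδ hδx hef

/-- Let `x` be a non-zerodivisor of a Noetherian ring `R` of prime
characteristic `p`, and suppose `R` has finite F-representation type by finitely
generated `R`-modules `M_1, …, M_s`.  If the descending chain
`I_1(x^{p-1}, M_i) ⊇ I_2(x^{p²-1}, M_i) ⊇ ⋯` stabilizes at `e` for all `i`, then there
exists `δ ∈ D_R^{(e+1)}` with `δ(1/x) = 1/x^p`.  When `R` is F-pure, the converse also
holds. -/
theorem stmt12 {R : Type u} [CommRing R] [IsNoetherianRing R]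
    (p : ℕ) (hp : p.Prime) [CharP R p]
    (x : R) (hx : x ∈ nonZeroDivisors R)
    -- finite F-representation type by finitely generated modules `M_1, …, M_s`:
    (s : ℕ) (M : Fin s → Type u) [∀ i, AddCommGroup (M i)] [∀ i, Module R (M i)]
    (hfg : ∀ i, Module.Finite R (M i))
    (hFFRT : ∀ e : ℕ, ∃ (m : Fin s → ℕ)
      (ψ : R ≃+ ⨁ i : Fin s, (Fin (m i) → M i)),
        ∀ r y : R, ψ (r ^ p ^ e * y) = r • ψ y)
    (e : ℕ) (he : 1 ≤ e) :
    ((∀ i, chainStabilizesAt p R (M i) x e) →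
      existsDiffOpSendingInvToInvPow p R x e) ∧
    (FPure p R →
      existsDiffOpSendingInvToInvPow p R x e →
      ∀ i, chainStabilizesAt p R (M i) x e) :=
  stmt12_general p hp x hx s M hFFRT e
end

section
/- Let R = ⨁_{n≥0} R_n be a Noetherian graded ring with R_0 a field of characteristic p > 0 having finite graded F-representation type by finitely generated ℚ-graded R-modules M_1, …, M_s, normalized so that [M_i]_0 ≠ 0 and [M_i]_α = 0 for α < 0. Write ᵉR ≅ ⨁_{i=1}^s ⨁_{j=1}^{n_{ei}} M_i(α_{ij}^{(e)}) as ℚ-graded R-modules. Then the set of shifts {α_{ij}^{(e)} : e ∈ ℕ, 1 ≤ i ≤ s, 1 ≤ j ≤ n_{ei}} is bounded: each α_{ij}^{(e)} ≤ 0, and there is a constant (independent of e) bounding all α_{ij}^{(e)} from below. -/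
/-!
Upper bound: a nonzero `u ∈ [M_i]_0` pulls back under `ψ_e` to a nonzero element of `R` all of
whose homogeneous components have degree `-α pᵉ`, so `α ≤ 0`.

Lower bound: if the `M_i` are generated in degrees `≤ D` and the shifts for `e = 1` are `≥ A`,
then `R` is generated over `R^p` by `[R]_{≤ (D - A) p}`, since homogeneous elements of the summands
pull back to homogeneous elements of `R`. Additivity of Frobenius iterates this: `R` is generated
over `R^{pᵉ}` by `[R]_{≤ 2 (D - A) pᵉ}`. These generators land in degrees `≤ α + 2 (D - A)` of a
summand `M_i(α)`, which is therefore zero unless `α ≥ -2 (D - A)`.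
-/

open scoped DirectSum

universe u

theorem Module.Finite.exists_span_mem_le_eq_top {R k M ι : Type*} [Semiring R] [Semiring k]
    [AddCommMonoid M] [Module R M] [Module k M] [Module.Finite R M]
    [Preorder ι] [IsDirectedOrder ι] [Nonempty ι] (ℳ : ι → Submodule k M) (hℳ : ⨆ γ, ℳ γ = ⊤) :
    ∃ D, Submodule.span R {v | ∃ γ ≤ D, v ∈ ℳ γ} = ⊤ := by
  set N : ι → Submodule R M := fun D => Submodule.span R {v | ∃ γ ≤ D, v ∈ ℳ γ}
  have hN : Monotone N := fun D D' h =>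
    Submodule.span_mono fun v ⟨γ, hγ, hv⟩ => ⟨γ, hγ.trans h, hv⟩
  have hsup : ⊤ ≤ sSup (Set.range N) := by
    intro v _
    have hv : v ∈ ⨆ γ, ℳ γ := hℳ ▸ Submodule.mem_top
    refine Submodule.iSup_induction ℳ (motive := (· ∈ sSup (Set.range N))) hv
      (fun γ x hx => ?_) (zero_mem _) fun _ _ => add_mem
    exact (le_sSup (Set.mem_range_self (f := N) γ) : N γ ≤ _)
      (Submodule.subset_span ⟨γ, le_rfl, hx⟩)
  obtain ⟨-, ⟨D, rfl⟩, hD⟩ := (CompleteLattice.isCompactElement_iff_le_of_directed_sSup_le _ _).mp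
    ((Submodule.fg_iff_compact _).mp Module.Finite.fg_top) _ (Set.range_nonempty N)
    (directedOn_range.mpr hN.directed_le) hsup
  exact ⟨D, top_le_iff.mp hD⟩

theorem DirectSum.decompose_map_apply_of_mapsTo {ι ι' M N σ τ : Type*} [DecidableEq ι]
    [DecidableEq ι'] [AddCommMonoid M] [AddCommMonoid N] [SetLike σ M] [AddSubmonoidClass σ M]
    [SetLike τ N] [AddSubmonoidClass τ N] (𝒜 : ι → σ) (ℳ : ι' → τ) [Decomposition 𝒜]
    [Decomposition ℳ] (f : M →+ N) {g : ι → ι'} (hg : Function.Injective g)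
    (hf : ∀ i, ∀ x ∈ 𝒜 i, f x ∈ ℳ (g i)) (x : M) (i : ι) :
    (decompose ℳ (f x) (g i) : N) = f (decompose 𝒜 x i) := by
  induction x using Decomposition.inductionOn 𝒜 with
  | zero => simp
  | @homogeneous j x =>
    obtain rfl | hji := eq_or_ne j i
    · rw [decompose_of_mem_same _ x.2, decompose_of_mem_same _ (hf j _ x.2)]
    · rw [decompose_of_mem_ne _ x.2 hji, decompose_of_mem_ne _ (hf j _ x.2) (hg.ne hji), map_zero]
  | add x y hx hy => simp only [map_add, decompose_add, add_apply, AddMemClass.coe_add, hx, hy]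

section FrobeniusSpan

variable {k R : Type*} [CommSemiring k] [CommRing R] [Algebra k R] (𝒜 : ℕ → Submodule k R)
  (p : ℕ)

/-- The `R`-submodule of `ᵉR` generated by `[R]_{≤ b}`, i.e. by homogeneous elements of `ᵉR` of
degree at most `b / pᵉ`, viewed as an additive subgroup of `R`. -/
def frobeniusSpan (e : ℕ) (b : ℚ) : Submodule ℤ R :=
  Submodule.span ℤ {z | ∃ (r x : R) (d : ℕ), (d : ℚ) ≤ b ∧ x ∈ 𝒜 d ∧ r ^ p ^ e * x = z}

variable {𝒜 p}

theorem pow_mul_mem_frobeniusSpan {e : ℕ} {b : ℚ} {z : R} (hz : z ∈ frobeniusSpan 𝒜 p e b)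
    (r : R) : r ^ p ^ e * z ∈ frobeniusSpan 𝒜 p e b := by
  induction hz using Submodule.span_induction with
  | mem _ h =>
    obtain ⟨s, x, d, hd, hx, rfl⟩ := h
    exact Submodule.subset_span ⟨r * s, x, d, hd, hx, by ring⟩
  | zero => simp
  | add _ _ _ _ ha hb => rw [mul_add]; exact add_mem ha hb
  | smul n _ _ ha => rw [mul_smul_comm]; exact Submodule.smul_mem _ n ha

theorem frobeniusSpan_mono {e : ℕ} {b b' : ℚ} (h : b ≤ b') :
    frobeniusSpan 𝒜 p e b ≤ frobeniusSpan 𝒜 p e b' :=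
  Submodule.span_mono fun _ ⟨r, x, d, hd, hx, hz⟩ => ⟨r, x, d, hd.trans h, hx, hz⟩

variable [GradedRing 𝒜]

theorem mem_frobeniusSpan_of_decompose {e : ℕ} {b : ℚ} {y : R}
    (hy : ∀ d, (DirectSum.decompose 𝒜 y d : R) ≠ 0 → (d : ℚ) ≤ b) :
    y ∈ frobeniusSpan 𝒜 p e b := by
  classical
  rw [← DirectSum.sum_support_decompose 𝒜 y]
  refine Submodule.sum_mem _ fun d _ => ?_
  by_cases hd : (DirectSum.decompose 𝒜 y d : R) = 0
  · rw [hd]; exact zero_mem _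
  · exact Submodule.subset_span ⟨1, _, d, hy d hd, (DirectSum.decompose 𝒜 y d).2, by simp⟩

theorem frobeniusSpan_zero_zero : frobeniusSpan 𝒜 p 0 0 = ⊤ :=
  Submodule.eq_top_iff'.mpr fun z =>
    Submodule.subset_span ⟨z, 1, 0, le_rfl, SetLike.one_mem_graded 𝒜, by simp⟩

variable [Fact p.Prime] [CharP R p]

theorem frobeniusSpan_add_eq_top {e e' : ℕ} {b b' : ℚ} (h : frobeniusSpan 𝒜 p e b = ⊤)
    (h' : frobeniusSpan 𝒜 p e' b' = ⊤) : frobeniusSpan 𝒜 p (e' + e) (p ^ e * b' + b) = ⊤ := by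
  have key : ∀ (x : R) (d : ℕ), x ∈ 𝒜 d → (d : ℚ) ≤ b → ∀ r : R,
      r ^ p ^ e * x ∈ frobeniusSpan 𝒜 p (e' + e) (p ^ e * b' + b) := by
    intro x d hx hd r
    induction (h' ▸ Submodule.mem_top : r ∈ frobeniusSpan 𝒜 p e' b') using
      Submodule.span_induction with
    | mem _ hr =>
      obtain ⟨s, w, d', hd', hw, rfl⟩ := hr
      refine Submodule.subset_span ⟨s, w ^ p ^ e * x, p ^ e * d' + d, ?_,
        SetLike.mul_mem_graded (SetLike.pow_mem_graded _ hw) hx, ?_⟩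
      · push_cast; gcongr
      · rw [mul_pow, ← pow_mul, ← pow_add]; ring
    | zero => simp [zero_pow (pow_ne_zero e (Fact.out : p.Prime).ne_zero)]
    | add _ _ _ _ ha hb => rw [add_pow_char_pow, add_mul]; exact add_mem ha hb
    | smul n _ _ ha => rw [smul_pow, smul_mul_assoc]; exact Submodule.smul_mem _ _ ha
  refine Submodule.eq_top_iff'.mpr fun z => ?_
  induction (h ▸ Submodule.mem_top : z ∈ frobeniusSpan 𝒜 p e b) using
    Submodule.span_induction with
  | mem _ hz =>
    obtain ⟨r, x, d, hd, hx, rfl⟩ := hz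
    exact key x d hx hd r
  | zero => exact zero_mem _
  | add _ _ _ _ ha hb => exact add_mem ha hb
  | smul n _ _ ha => exact Submodule.smul_mem _ n ha

theorem frobeniusSpan_pow_eq_top {c : ℚ} (hc : 0 ≤ c) (h1 : frobeniusSpan 𝒜 p 1 (c * p) = ⊤)
    (e : ℕ) : frobeniusSpan 𝒜 p e (2 * c * p ^ e) = ⊤ := by
  induction e with
  | zero =>
    exact top_le_iff.mp (frobeniusSpan_zero_zero.ge.trans (frobeniusSpan_mono (by positivity)))
  | succ e ih =>
    have h := frobeniusSpan_add_eq_top ih h1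
    rw [add_comm 1 e] at h
    refine top_le_iff.mp (h.ge.trans (frobeniusSpan_mono ?_))
    have hp : (2 : ℚ) ≤ p := by exact_mod_cast (Fact.out : p.Prime).two_le
    have hcp : 0 ≤ c * (p : ℚ) ^ e := by positivity
    rw [pow_succ]
    nlinarith

end FrobeniusSpan

section FrobeniusDecomposition

variable {k R : Type*} [CommSemiring k] [CommRing R] [Algebra k R] (𝒜 : ℕ → Submodule k R)
  {ι : Type*} {M : ι → Type*} [∀ c, AddCommGroup (M c)] [∀ c, Module k (M c)]
  {ℳ : ∀ c, ℚ → Submodule k (M c)} {p e : ℕ} {ψ : R ≃+ ⨁ c, M c} {α : ι → ℚ}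

theorem decompose_symm_of_of_mem_ne [DirectSum.Decomposition 𝒜] [DecidableEq ι] (hp : p ≠ 0)
    (hℳ : ∀ c, DirectSum.IsInternal (ℳ c))
    (hgr : ∀ (d : ℕ) (y : R), y ∈ 𝒜 d → ∀ c, ψ y c ∈ ℳ c (α c + (d : ℚ) / (p : ℚ) ^ e))
    {c : ι} {γ : ℚ} {v : M c} (hv : v ∈ ℳ c γ) {d : ℕ} (hd : α c + (d : ℚ) / (p : ℚ) ^ e ≠ γ) :
    (DirectSum.decompose 𝒜 (ψ.symm (DirectSum.of M c v)) d : R) = 0 := by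
  classical
  refine ψ.injective (DFinsupp.ext fun c' => ?_)
  let := (hℳ c').chooseDecomposition
  have hinj : Function.Injective fun d : ℕ => α c' + (d : ℚ) / (p : ℚ) ^ e := fun d₁ d₂ h => by
    exact_mod_cast (div_left_inj' (pow_ne_zero e (Nat.cast_ne_zero.mpr hp))).mp (add_left_cancel h)
  have := DirectSum.decompose_map_apply_of_mapsTo 𝒜 (ℳ c')
    (AddMonoidHom.mk' (fun y => ψ y c') fun _ _ => by simp) hinj (fun d y hy => hgr d y hy c')
    (ψ.symm (DirectSum.of M c v)) d
  simp only [AddMonoidHom.mk'_apply, AddEquiv.apply_symm_apply] at this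
  rw [← this, map_zero, DirectSum.zero_apply]
  obtain rfl | hc := eq_or_ne c c'
  · rw [DirectSum.of_eq_same, DirectSum.decompose_of_mem_ne _ hv (Ne.symm hd)]
  · rw [DirectSum.of_eq_of_ne _ _ _ hc.symm, DirectSum.decompose_zero, DirectSum.zero_apply,
      ZeroMemClass.coe_zero]

theorem shift_nonpos [DirectSum.Decomposition 𝒜] (hp : p ≠ 0)
    (hℳ : ∀ c, DirectSum.IsInternal (ℳ c))
    (hgr : ∀ (d : ℕ) (y : R), y ∈ 𝒜 d → ∀ c, ψ y c ∈ ℳ c (α c + (d : ℚ) / (p : ℚ) ^ e))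
    {c : ι} (h0 : ℳ c 0 ≠ ⊥) : α c ≤ 0 := by
  classical
  obtain ⟨v, hv, hv0⟩ := (Submodule.ne_bot_iff _).mp h0
  set y := ψ.symm (DirectSum.of M c v)
  have hy : y ≠ 0 := by
    simpa [y] using (map_ne_zero_iff _ (DirectSum.of_injective c)).mpr hv0
  obtain ⟨d, hd⟩ : ∃ d, (DirectSum.decompose 𝒜 y d : R) ≠ 0 := by
    by_contra! h
    exact hy (by rw [← DirectSum.sum_support_decompose 𝒜 y]; simp [h])
  have hdeg : α c + (d : ℚ) / (p : ℚ) ^ e = 0 :=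
    not_not.mp (mt (decompose_symm_of_of_mem_ne 𝒜 hp hℳ hgr hv) hd)
  have : 0 ≤ (d : ℚ) / (p : ℚ) ^ e := by positivity
  linarith

theorem frobeniusSpan_eq_top_of_decomposition [GradedRing 𝒜] [∀ c, Module R (M c)] (hp : p ≠ 0)
    (hℳ : ∀ c, DirectSum.IsInternal (ℳ c)) (hψ : ∀ r y : R, ψ (r ^ p ^ e * y) = r • ψ y)
    (hgr : ∀ (d : ℕ) (y : R), y ∈ 𝒜 d → ∀ c, ψ y c ∈ ℳ c (α c + (d : ℚ) / (p : ℚ) ^ e))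
    {D : ι → ℚ} (hD : ∀ c, Submodule.span R {v | ∃ γ ≤ D c, v ∈ ℳ c γ} = ⊤) {b : ℚ}
    (hb : ∀ c, (D c - α c) * (p : ℚ) ^ e ≤ b) : frobeniusSpan 𝒜 p e b = ⊤ := by
  classical
  have hpe : (0 : ℚ) < (p : ℚ) ^ e := by positivity
  refine Submodule.eq_top_iff'.mpr fun z => ?_
  rw [← ψ.symm_apply_apply z]
  induction ψ z using DirectSum.induction_on with
  | zero => simp
  | of c v =>
    induction (hD c ▸ Submodule.mem_top : v ∈ Submodule.span R _) using
      Submodule.span_induction with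
    | mem v hv =>
      obtain ⟨γ, hγ, hv⟩ := hv
      refine mem_frobeniusSpan_of_decompose fun d hd => ?_
      have hdeg : α c + (d : ℚ) / (p : ℚ) ^ e = γ :=
        not_not.mp (mt (decompose_symm_of_of_mem_ne 𝒜 hp hℳ hgr hv) hd)
      calc (d : ℚ) = (γ - α c) * (p : ℚ) ^ e := by
            rw [← hdeg, add_sub_cancel_left, div_mul_cancel₀ _ hpe.ne']
        _ ≤ (D c - α c) * (p : ℚ) ^ e := by gcongr
        _ ≤ b := hb c
    | zero => simp
    | add _ _ _ _ hv hw => rw [map_add, map_add]; exact add_mem hv hw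
    | smul r v _ hv =>
      rw [DirectSum.of_smul, ← ψ.apply_symm_apply (DirectSum.of M c v), ← hψ,
        ψ.symm_apply_apply]
      exact pow_mul_mem_frobeniusSpan hv r
  | add _ _ hv hw => rw [map_add]; exact add_mem hv hw

theorem neg_div_le_shift_of_frobeniusSpan_eq_top [GradedRing 𝒜] [∀ c, Module R (M c)]
    (hψ : ∀ r y : R, ψ (r ^ p ^ e * y) = r • ψ y)
    (hgr : ∀ (d : ℕ) (y : R), y ∈ 𝒜 d → ∀ c, ψ y c ∈ ℳ c (α c + (d : ℚ) / (p : ℚ) ^ e))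
    {c : ι} [Nontrivial (M c)] (hneg : ∀ β < 0, ℳ c β = ⊥) {b : ℚ}
    (hF : frobeniusSpan 𝒜 p e b = ⊤) : -(b / (p : ℚ) ^ e) ≤ α c := by
  classical
  by_contra! hlt
  have hvanish : ∀ z, ψ z c = 0 := by
    intro z
    induction (hF ▸ Submodule.mem_top : z ∈ frobeniusSpan 𝒜 p e b) using
      Submodule.span_induction with
    | mem _ hz =>
      obtain ⟨r, x, d, hd, hx, rfl⟩ := hz
      have hdeg : α c + (d : ℚ) / (p : ℚ) ^ e < 0 := by
        have : (d : ℚ) / (p : ℚ) ^ e ≤ b / (p : ℚ) ^ e := by gcongr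
        linarith
      have hx0 := hgr d x hx c
      rw [hneg _ hdeg, Submodule.mem_bot] at hx0
      rw [hψ, DirectSum.smul_apply, hx0, smul_zero]
    | zero => simp
    | add _ _ _ _ ha hb => rw [map_add, DirectSum.add_apply, ha, hb, add_zero]
    | smul n _ _ ha => rw [map_zsmul, DirectSum.smul_apply, ha, smul_zero]
  obtain ⟨v, hv⟩ := exists_ne (0 : M c)
  exact hv (by simpa using hvanish (ψ.symm (DirectSum.of M c v)))

end FrobeniusDecomposition

theorem stmt15_general {k : Type u} [Field k] {R : Type u} [CommRing R] [Algebra k R]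
    -- the grading of `R`, with `R_0 = k`:
    (𝒜 : ℕ → Submodule k R) [GradedAlgebra 𝒜]
    (p : ℕ) (hp : p.Prime) [CharP R p]
    -- the finitely generated `ℚ`-graded modules `M_1, …, M_s`:
    (s : ℕ) (M : Fin s → Type u) [∀ i, AddCommGroup (M i)] [∀ i, Module R (M i)]
    [∀ i, Module k (M i)]
    (ℳ : ∀ i, ℚ → Submodule k (M i))
    (hfg : ∀ i, Module.Finite R (M i))
    (hinternal : ∀ i, DirectSum.IsInternal (ℳ i))
    -- normalization of the gradings of the `M_i`:
    (hnorm0 : ∀ i, ℳ i 0 ≠ ⊥)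
    (hnormneg : ∀ (i : Fin s) (β : ℚ), β < 0 → ℳ i β = ⊥)
    -- the decompositions `ᵉR ≅ ⨁_{i,j} M_i(α_{ij}^{(e)})` with shifts `α`:
    (m : ℕ → Fin s → ℕ) (α : ∀ (e : ℕ) (i : Fin s), Fin (m e i) → ℚ)
    (ψ : ∀ e : ℕ, R ≃+ ⨁ ij : (Σ i : Fin s, Fin (m e i)), M ij.1)
    (hψ : ∀ (e : ℕ) (r y : R), (ψ e) (r ^ p ^ e * y) = r • (ψ e) y)
    (hgr : ∀ (e : ℕ) (d : ℕ) (y : R), y ∈ 𝒜 d → ∀ ij : Σ i : Fin s, Fin (m e i),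
      ((ψ e) y) ij ∈ ℳ ij.1 (α e ij.1 ij.2 + (d : ℚ) / (p : ℚ) ^ e)) :
    (∀ (e : ℕ) (i : Fin s) (j : Fin (m e i)), α e i j ≤ 0) ∧
    ∃ C : ℚ, ∀ (e : ℕ) (i : Fin s) (j : Fin (m e i)), C ≤ α e i j := by
  have : Fact p.Prime := ⟨hp⟩
  have hℳ : ∀ e (ij : Σ i : Fin s, Fin (m e i)), DirectSum.IsInternal (ℳ ij.1) :=
    fun _ ij => hinternal ij.1
  refine ⟨fun e i j => shift_nonpos 𝒜 hp.ne_zero (hℳ e) (hgr e) (c := ⟨i, j⟩) (hnorm0 i), ?_⟩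
  choose D hD using fun i =>
    (hfg i).exists_span_mem_le_eq_top (ℳ i) (hinternal i).submodule_iSup_eq_top
  obtain ⟨D₀, hD₀⟩ := Finite.exists_le D
  obtain ⟨A, hA⟩ := Finite.exists_ge fun ij : Σ i : Fin s, Fin (m 1 i) => α 1 ij.1 ij.2
  set c := max (D₀ - A) 0
  have h1 : frobeniusSpan 𝒜 p 1 (c * p) = ⊤ :=
    frobeniusSpan_eq_top_of_decomposition 𝒜 hp.ne_zero (hℳ 1) (hψ 1) (hgr 1) (fun ij => hD ij.1)
      fun ij => by rw [pow_one]; gcongr; exact le_max_of_le_left (by linarith [hD₀ ij.1, hA ij])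
  refine ⟨-(2 * c), fun e i j => ?_⟩
  obtain ⟨u, -, hu⟩ := (Submodule.ne_bot_iff _).mp (hnorm0 i)
  have : Nontrivial (M i) := ⟨u, 0, hu⟩
  have hpe : (p : ℚ) ^ e ≠ 0 := pow_ne_zero e (Nat.cast_ne_zero.mpr hp.ne_zero)
  simpa [mul_div_cancel_right₀ _ hpe] using
    neg_div_le_shift_of_frobeniusSpan_eq_top 𝒜 (hψ e) (hgr e) (c := ⟨i, j⟩) (hnormneg i)
      (frobeniusSpan_pow_eq_top (le_max_right _ _) h1 e)

/-- Let `R = ⨁_{n ≥ 0} R_n` be a Noetherian graded ring with `R_0 = k`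
a field of characteristic `p > 0`, having finite graded F-representation type by
finitely generated `ℚ`-graded `R`-modules `M_1, …, M_s` normalized so that
`[M_i]_0 ≠ 0` and `[M_i]_α = 0` for `α < 0`.  Write, for each `e`,
`ᵉR ≅ ⨁_{i,j} M_i(α_{ij}^{(e)})` as `ℚ`-graded `R`-modules (a degree shift `M(α)`
satisfies `[M(α)]_β = [M]_{α+β}`; since `[ᵉR]_β = [R]_{pᵉβ}`, an element of `𝒜 d` is
homogeneous of degree `d/pᵉ` in `ᵉR` and its `(i,j)`-component lies in
`[M_i]_{α_{ij}^{(e)} + d/pᵉ}`).  Then the set of shifts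
`{α_{ij}^{(e)} : e, i, j}` is bounded: each `α_{ij}^{(e)} ≤ 0`, and there is a constant
independent of `e` bounding all `α_{ij}^{(e)}` from below. -/
theorem stmt15 {k : Type u} [Field k] {R : Type u} [CommRing R] [Algebra k R]
    [IsNoetherianRing R]
    -- the grading of `R`, with `R_0 = k`:
    (𝒜 : ℕ → Submodule k R) [GradedAlgebra 𝒜]
    (h0 : 𝒜 0 = Submodule.span k {1})
    (p : ℕ) (hp : p.Prime) [CharP R p]
    -- the finitely generated `ℚ`-graded modules `M_1, …, M_s`:
    (s : ℕ) (M : Fin s → Type u) [∀ i, AddCommGroup (M i)] [∀ i, Module R (M i)]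
    [∀ i, Module k (M i)] [∀ i, IsScalarTower k R (M i)]
    (ℳ : ∀ i, ℚ → Submodule k (M i))
    (hfg : ∀ i, Module.Finite R (M i))
    (hinternal : ∀ i, DirectSum.IsInternal (ℳ i))
    (hsmul : ∀ (i : Fin s) (n : ℕ) (α : ℚ) (r : R) (m : M i),
      r ∈ 𝒜 n → m ∈ ℳ i α → r • m ∈ ℳ i ((n : ℚ) + α))
    -- normalization of the gradings of the `M_i`:
    (hnorm0 : ∀ i, ℳ i 0 ≠ ⊥)
    (hnormneg : ∀ (i : Fin s) (β : ℚ), β < 0 → ℳ i β = ⊥)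
    -- the decompositions `ᵉR ≅ ⨁_{i,j} M_i(α_{ij}^{(e)})` with shifts `α`:
    (m : ℕ → Fin s → ℕ) (α : ∀ (e : ℕ) (i : Fin s), Fin (m e i) → ℚ)
    (ψ : ∀ e : ℕ, R ≃+ ⨁ ij : (Σ i : Fin s, Fin (m e i)), M ij.1)
    (hψ : ∀ (e : ℕ) (r y : R), (ψ e) (r ^ p ^ e * y) = r • (ψ e) y)
    (hgr : ∀ (e : ℕ) (d : ℕ) (y : R), y ∈ 𝒜 d → ∀ ij : Σ i : Fin s, Fin (m e i),
      ((ψ e) y) ij ∈ ℳ ij.1 (α e ij.1 ij.2 + (d : ℚ) / (p : ℚ) ^ e)) :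
    (∀ (e : ℕ) (i : Fin s) (j : Fin (m e i)), α e i j ≤ 0) ∧
    ∃ C : ℚ, ∀ (e : ℕ) (i : Fin s) (j : Fin (m e i)), C ≤ α e i j :=
  stmt15_general 𝒜 p hp s M ℳ hfg hinternal hnorm0 hnormneg m α ψ hψ hgr
end

section
/- Let R be an F-finite Noetherian reduced ring of characteristic p > 0 and x ∈ R a non-zerodivisor such that the pair (R, x) is F-pure. Then R_x is generated by 1/x as a D_R-module, where D_R = ⋃_{q=pᵉ} End_{R^q}(R). -/
/-!
Write `y ∈ R_x` as `r / xⁿ` and let `q = pⁿ ≥ n`. F-purity of `(R, x)` gives an `R`-linear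
`φ : ᵉR → R` with `φ(x^{q-1}) = 1`; then `δ = r x^{q-n} · (φ -)^q` is `R^q`-linear and
`δ(1/x) = δ(x^{q-1}) / x^q = r x^{q-n} / x^q = y`.
-/

universe u

section Defs

/-- `R` is F-finite: `¹R` is a finitely generated `R`-module. -/
def FFinite (p : ℕ) (R : Type u) [CommRing R] : Prop :=
  ∃ (n : ℕ) (g : Fin n → R), ∀ r : R, ∃ c : Fin n → R, r = ∑ i, c i ^ p * g i

/-- The pair `(R, x)` is F-pure: for every `q = pᵉ` the inclusion
`x^{(q-1)/q} R ↪ R^{1/q}` splits; equivalently, for every `e` there is an `R`-linear map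
`ᵉR → R` sending `x^{pᵉ - 1}` to `1`. -/
def FPurePair (p : ℕ) (R : Type u) [CommRing R] (x : R) : Prop :=
  ∀ e : ℕ, ∃ φ : R →+ R,
    (∀ r y : R, φ (r ^ p ^ e * y) = r * φ y) ∧ φ (x ^ (p ^ e - 1)) = 1

end Defs

section FrobeniusTwist

variable {R : Type*} [CommRing R] (p e : ℕ) [ExpChar R p]

def AddMonoidHom.mulIterateFrobeniusComp (c : R) (φ : R →+ R) : R →+ R :=
  (AddMonoidHom.mulLeft c).comp ((iterateFrobenius R p e).toAddMonoidHom.comp φ)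

@[simp]
lemma AddMonoidHom.mulIterateFrobeniusComp_apply (c : R) (φ : R →+ R) (z : R) :
    mulIterateFrobeniusComp p e c φ z = c * φ z ^ p ^ e :=
  rfl

lemma AddMonoidHom.mulIterateFrobeniusComp_map_pow_mul {φ : R →+ R}
    (hφ : ∀ r z : R, φ (r ^ p ^ e * z) = r * φ z) (c r z : R) :
    mulIterateFrobeniusComp p e c φ (r ^ p ^ e * z) =
      r ^ p ^ e * mulIterateFrobeniusComp p e c φ z := by
  simp only [mulIterateFrobeniusComp_apply, hφ, mul_pow, mul_left_comm]

end FrobeniusTwist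

lemma IsLocalization.Away.exists_algebraMap_eq_mul_pow {R S : Type*} [CommRing R] [CommRing S]
    [Algebra R S] (x : R) [IsLocalization.Away x S] (y : S) :
    ∃ n, ∀ m, n ≤ m → ∃ r, algebraMap R S r = y * algebraMap R S x ^ m := by
  obtain ⟨n, a, hy⟩ := IsLocalization.Away.surj x y
  refine ⟨n, fun m hm => ⟨a * x ^ (m - n), ?_⟩⟩
  rw [map_mul, ← hy, map_pow, mul_assoc, ← pow_add, Nat.add_sub_cancel' hm]

/-- `δ` acts on `R_x` by `δ(z/s) = δ(s^{pᵉ-1}z)/s^{pᵉ}`, so `δ(1/x) = y` reads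
`δ(x^{pᵉ-1}) = y·x^{pᵉ}` in `R_x`. -/
theorem stmt17_general {R : Type u} [CommRing R]
    (p : ℕ) (hp : p.Prime) [CharP R p]
    (x : R) (hFP : FPurePair p R x) :
    ∀ y : Localization.Away x,
      ∃ (e : ℕ) (δ : R →+ R),
        (∀ r z : R, δ (r ^ p ^ e * z) = r ^ p ^ e * δ z) ∧
        algebraMap R (Localization.Away x) (δ (x ^ (p ^ e - 1))) =
          y * algebraMap R (Localization.Away x) x ^ p ^ e := by
  have : ExpChar R p := .prime hp
  intro y
  obtain ⟨n, hn⟩ := IsLocalization.Away.exists_algebraMap_eq_mul_pow x y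
  obtain ⟨r, hr⟩ := hn (p ^ n) (Nat.lt_pow_self hp.one_lt).le
  obtain ⟨φ, hφ, hφx⟩ := hFP n
  refine ⟨n, .mulIterateFrobeniusComp p n r φ,
    AddMonoidHom.mulIterateFrobeniusComp_map_pow_mul p n hφ r, ?_⟩
  rw [AddMonoidHom.mulIterateFrobeniusComp_apply, hφx, one_pow, mul_one, hr]

/-- Let `R` be an F-finite Noetherian reduced ring of characteristic
`p > 0` and `x ∈ R` a non-zerodivisor such that the pair `(R, x)` is F-pure.  Then `R_x`
is generated by `1/x` as a `D_R`-module, where `D_R = ⋃_{q=pᵉ} End_{R^q}(R)`: every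
`y ∈ R_x` equals `δ(1/x)` for some `R^{pᵉ}`-linear `δ : R → R`.  (Such a `δ` acts on
`R_x` by `δ(z/s) = δ(s^{pᵉ-1}z)/s^{pᵉ}`, so `δ(1/x) = y` reads
`δ(x^{pᵉ-1}) = y·x^{pᵉ}` in `R_x`.) -/
theorem stmt17 {R : Type u} [CommRing R] [IsNoetherianRing R] [IsReduced R]
    (p : ℕ) (hp : p.Prime) [CharP R p] (hFF : FFinite p R)
    (x : R) (hx : x ∈ nonZeroDivisors R) (hFP : FPurePair p R x) :
    ∀ y : Localization.Away x,
      ∃ (e : ℕ) (δ : R →+ R),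
        (∀ r z : R, δ (r ^ p ^ e * z) = r ^ p ^ e * δ z) ∧
        algebraMap R (Localization.Away x) (δ (x ^ (p ^ e - 1))) =
          y * algebraMap R (Localization.Away x) x ^ p ^ e :=
  stmt17_general p hp x hFP
end
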